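/- arXiv:2311.11924 — 3 statements merged into one kernel-verified Lean document; each statement's English description precedes it below -/
import Mathlib

section
/- Let Z be a standard Gaussian and define φ(x) = E[tanh²(β√x Z)] for x ≥ 0 (i.e., h = 0). If |β| ≤ 1, then 0 is the only fixed point of φ on [0,∞) and φ(x) < x for all x > 0. If |β| > 1, then φ has exactly two fixed points 0 and q > 0, with φ(x) > x for x ∈ (0,q) and φ(x) < x for x > q. -/
/-
Write `g t = tanh t / t`. Since `tanh` is strictly concave on `[0, ∞)`, `g` is the slope of a
chord through the origin and so decreases strictly from `g 0⁺ = tanh' 0 = 1`. For `x > 0`,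
`tanh² (β √x Z) / x = (βZ)² g(|βZ| √x)²`, so `φ(x)/x` is strictly decreasing (for `β ≠ 0`) and tends
to `β² E[Z²] = β²` as `x → 0⁺` by dominated convergence. Hence `φ(x)/x < β² ≤ 1` when `|β| ≤ 1`;
when `|β| > 1` the continuous function `φ(x)/x` starts above `1` and is below `1` at `x = 2`
(as `φ ≤ 1`), so it crosses `1` at exactly one `q`.
-/

open MeasureTheory ProbabilityTheory

/-- `φ(x) = E[tanh²(h + β √x Z)]`, `Z` a standard Gaussian. Here we use `h = 0`. -/
noncomputable def phi (h β x : ℝ) : ℝ :=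
  ∫ z, Real.tanh (h + β * Real.sqrt x * z) ^ 2 ∂(gaussianReal 0 1)

open Filter Set Topology

theorem StrictAntiOn.lt_of_tendsto_nhdsGT {g : ℝ → ℝ} {a L : ℝ} (hg : StrictAntiOn g (Ioi a))
    (hL : Tendsto g (𝓝[>] a) (𝓝 L)) {x : ℝ} (hx : a < x) : g x < L := by
  obtain ⟨m, ham, hmx⟩ := exists_between hx
  refine (hg ham hx hmx).trans_le (ge_of_tendsto hL ?_)
  filter_upwards [Ioo_mem_nhdsGT ham] with y hy
  exact (hg hy.1 ham hy.2).le

theorem exists_pos_fixedPoint_of_div_strictAntiOn {f : ℝ → ℝ} {L b : ℝ}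
    (hanti : StrictAntiOn (fun x => f x / x) (Ioi 0)) (hf : ContinuousOn f (Ioi 0))
    (hlim : Tendsto (fun x => f x / x) (𝓝[>] 0) (𝓝 L)) (hL : 1 < L) (hb : 0 < b)
    (hfb : f b < b) :
    ∃ q, 0 < q ∧ f q = q ∧ (∀ x, 0 < x → f x = x → x = q) ∧
      (∀ x, 0 < x → x < q → x < f x) ∧ ∀ x, q < x → f x < x := by
  obtain ⟨a, ha, ⟨ha0, hab⟩⟩ : ∃ a, 1 < f a / a ∧ a ∈ Ioo 0 b :=
    ((hlim.eventually (lt_mem_nhds hL)).and (Ioo_mem_nhdsGT hb)).exists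
  have hsub : Icc a b ⊆ Ioi 0 := fun x hx => ha0.trans_le hx.1
  have hcont : ContinuousOn (fun x => f x / x) (Icc a b) :=
    (hf.mono hsub).div continuousOn_id fun x hx => (hsub hx).ne'
  obtain ⟨q, hq, hq1⟩ :=
    intermediate_value_Icc' hab.le hcont ⟨((div_lt_one hb).2 hfb).le, ha.le⟩
  have hq0 : 0 < q := hsub hq
  have below : ∀ x, 0 < x → x < q → x < f x := fun x hx hxq =>
    (one_lt_div hx).1 (hq1 ▸ hanti hx hq0 hxq)
  have above : ∀ x, q < x → f x < x := fun x hqx =>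
    (div_lt_one (hq0.trans hqx)).1 (hq1 ▸ hanti hq0 (hq0.trans hqx) hqx)
  refine ⟨q, hq0, (div_eq_one_iff_eq hq0.ne').1 hq1, fun x hx hfx => ?_, below, above⟩
  rcases lt_trichotomy x q with h | h | h
  · exact absurd hfx (below x hx h).ne'
  · exact h
  · exact absurd hfx (above x h).ne

theorem integral_lt_integral_of_ae_lt {α : Type*} [MeasurableSpace α] {μ : Measure α} [NeZero μ]
    {f g : α → ℝ} (hf : Integrable f μ) (hg : Integrable g μ) (hlt : ∀ᵐ x ∂μ, f x < g x) :
    ∫ x, f x ∂μ < ∫ x, g x ∂μ := by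
  rw [← sub_pos, ← integral_sub hg hf, integral_pos_iff_support_of_nonneg_ae
    (hlt.mono fun x hx => (sub_pos.2 hx).le) (hg.sub hf)]
  have hfull : (Function.support fun x => g x - f x) ∈ ae μ :=
    hlt.mono fun x hx => (sub_pos.2 hx).ne'
  rw [measure_congr (eventuallyEq_univ.2 hfull)]
  exact Measure.measure_univ_pos.2 (NeZero.ne μ)

theorem integral_sq_gaussianReal_zero (v : NNReal) : ∫ z, z ^ 2 ∂(gaussianReal 0 v) = v := by
  simpa using (variance_eq_integral (X := fun z => z) (μ := gaussianReal 0 v)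
    measurable_id.aemeasurable).symm

namespace Real

theorem hasDerivAt_tanh (x : ℝ) : HasDerivAt tanh (1 - tanh x ^ 2) x := by
  have h := (hasDerivAt_sinh x).div (hasDerivAt_cosh x) (cosh_pos x).ne'
  rw [show sinh / cosh = tanh from funext fun y => (tanh_eq_sinh_div_cosh y).symm] at h
  refine h.congr_deriv ?_
  rw [tanh_eq_sinh_div_cosh]
  field_simp

@[fun_prop]
theorem continuous_tanh : Continuous tanh :=
  continuous_iff_continuousAt.2 fun x => (hasDerivAt_tanh x).continuousAt

theorem strictMono_tanh : StrictMono tanh :=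
  strictMono_of_hasDerivAt_pos hasDerivAt_tanh fun x => sub_pos.2 (tanh_sq_lt_one x)

theorem tanh_pos {x : ℝ} (hx : 0 < x) : 0 < tanh x := by
  simpa using strictMono_tanh hx

theorem tanh_nonneg {x : ℝ} (hx : 0 ≤ x) : 0 ≤ tanh x := by
  simpa using strictMono_tanh.monotone hx

theorem abs_tanh (x : ℝ) : |tanh x| = tanh |x| := by
  rcases le_total 0 x with hx | hx
  · rw [abs_of_nonneg hx, abs_of_nonneg (tanh_nonneg hx)]
  · rw [abs_of_nonpos hx, tanh_neg, abs_of_nonpos]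
    simpa [tanh_neg] using tanh_nonneg (neg_nonneg.2 hx)

theorem strictConcaveOn_tanh : StrictConcaveOn ℝ (Ici 0) tanh := by
  refine StrictAntiOn.strictConcaveOn_of_deriv (convex_Ici 0) continuous_tanh.continuousOn ?_
  rw [interior_Ici]
  intro x (hx : 0 < x) y _ hxy
  simp only [(hasDerivAt_tanh _).deriv]
  have := pow_lt_pow_left₀ (strictMono_tanh hxy) (tanh_pos hx).le two_ne_zero
  linarith

theorem tanh_div_self_strictAntiOn : StrictAntiOn (fun x => tanh x / x) (Ioi 0) := by
  intro x (hx : 0 < x) y (hy : 0 < y) hxy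
  simpa using strictConcaveOn_tanh.secant_strict_mono self_mem_Ici (mem_Ici.2 hx.le)
    (mem_Ici.2 hy.le) hx.ne' hy.ne' hxy

theorem tendsto_tanh_div_self : Tendsto (fun x => tanh x / x) (𝓝[>] 0) (𝓝 1) := by
  simpa [div_eq_inv_mul] using (hasDerivAt_tanh 0).tendsto_slope_zero_right

theorem abs_tanh_le_abs (x : ℝ) : |tanh x| ≤ |x| := by
  rcases eq_or_ne x 0 with rfl | hx
  · simp
  have h := tanh_div_self_strictAntiOn.lt_of_tendsto_nhdsGT tendsto_tanh_div_self
    (abs_pos.2 hx)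
  rw [abs_tanh]
  exact ((div_lt_one (abs_pos.2 hx)).1 h).le

theorem tanh_sq_le_sq (x : ℝ) : tanh x ^ 2 ≤ x ^ 2 :=
  sq_le_sq.2 (abs_tanh_le_abs x)

theorem tanh_sq_mul_sqrt_div_eq (a : ℝ) {x : ℝ} (hx : 0 < x) :
    tanh (a * √x) ^ 2 / x = a ^ 2 * (tanh (|a| * √x) / (|a| * √x)) ^ 2 := by
  rcases eq_or_ne a 0 with rfl | ha
  · simp
  have hs : 0 < √x := sqrt_pos.2 hx
  rw [← sq_abs (tanh _), abs_tanh, abs_mul, abs_of_pos hs, div_pow, mul_pow, sq_sqrt hx.le,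
    ← sq_abs a]
  field_simp

theorem tanh_sq_mul_sqrt_div_le (a x : ℝ) : tanh (a * √x) ^ 2 / x ≤ a ^ 2 := by
  rcases le_or_gt x 0 with hx | hx
  · simpa [sqrt_eq_zero'.2 hx] using sq_nonneg a
  rw [div_le_iff₀ hx]
  calc tanh (a * √x) ^ 2 ≤ (a * √x) ^ 2 := tanh_sq_le_sq _
    _ = a ^ 2 * x := by rw [mul_pow, sq_sqrt hx.le]

theorem tanh_sq_mul_sqrt_div_strictAntiOn {a : ℝ} (ha : a ≠ 0) :
    StrictAntiOn (fun x => tanh (a * √x) ^ 2 / x) (Ioi 0) := by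
  intro x (hx : 0 < x) y (hy : 0 < y) hxy
  have ha' : 0 < |a| := abs_pos.2 ha
  have hxy' : |a| * √x < |a| * √y := mul_lt_mul_of_pos_left (sqrt_lt_sqrt hx.le hxy) ha'
  have hx' : 0 < |a| * √x := mul_pos ha' (sqrt_pos.2 hx)
  have hy' : 0 < |a| * √y := hx'.trans hxy'
  simp only [tanh_sq_mul_sqrt_div_eq a hx, tanh_sq_mul_sqrt_div_eq a hy]
  gcongr ?_ * ?_
  exact pow_lt_pow_left₀ (tanh_div_self_strictAntiOn hx' hy' hxy')
    (div_nonneg (tanh_nonneg hy'.le) hy'.le) two_ne_zero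

theorem tendsto_tanh_sq_mul_sqrt_div (a : ℝ) :
    Tendsto (fun x => tanh (a * √x) ^ 2 / x) (𝓝[>] 0) (𝓝 (a ^ 2)) := by
  rcases eq_or_ne a 0 with rfl | ha
  · simp
  have hs : Tendsto (fun x => |a| * √x) (𝓝[>] 0) (𝓝[>] 0) := by
    refine tendsto_nhdsWithin_of_tendsto_nhds_of_eventually_within _ ?_ ?_
    · simpa using ((continuous_sqrt.tendsto 0).const_mul |a|).mono_left nhdsWithin_le_nhds
    · filter_upwards [self_mem_nhdsWithin] with x (hx : 0 < x)
      exact mul_pos (abs_pos.2 ha) (sqrt_pos.2 hx)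
  have h := ((tendsto_tanh_div_self.comp hs).pow 2).const_mul (a ^ 2)
  rw [one_pow, mul_one] at h
  refine h.congr' ?_
  filter_upwards [self_mem_nhdsWithin] with x (hx : 0 < x)
  exact (tanh_sq_mul_sqrt_div_eq a hx).symm

end Real

theorem integrable_tanh_sq_comp {α : Type*} [MeasurableSpace α] {μ : Measure α} [IsFiniteMeasure μ]
    {f : α → ℝ} (hf : AEStronglyMeasurable f μ) : Integrable (fun z => Real.tanh (f z) ^ 2) μ :=
  .of_bound ((Real.continuous_tanh.pow 2).comp_aestronglyMeasurable hf) 1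
    (ae_of_all _ fun z => by simpa using (Real.tanh_sq_lt_one (f z)).le)

theorem continuous_phi (h β : ℝ) : Continuous (phi h β) := by
  refine continuous_of_dominated (bound := fun _ => 1) (fun x => ?_) (fun x => ?_)
    (integrable_const 1) (ae_of_all _ fun z => by fun_prop)
  · exact (integrable_tanh_sq_comp (by fun_prop)).aestronglyMeasurable
  · exact ae_of_all _ fun z => by simpa using (Real.tanh_sq_lt_one _).le

theorem phi_le_one (h β x : ℝ) : phi h β x ≤ 1 := by
  calc phi h β x ≤ ∫ _, (1 : ℝ) ∂(gaussianReal 0 1) :=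
        integral_mono (integrable_tanh_sq_comp (by fun_prop)) (integrable_const 1)
          fun z => (Real.tanh_sq_lt_one _).le
    _ = 1 := by simp

theorem phi_zero_zero (β : ℝ) : phi 0 β 0 = 0 := by
  simp [phi]

theorem phi_zero_div_eq (β x : ℝ) :
    phi 0 β x / x = ∫ z, Real.tanh (β * z * √x) ^ 2 / x ∂(gaussianReal 0 1) := by
  simp only [phi, zero_add, ← integral_div, mul_right_comm β]

theorem phi_zero_div_strictAntiOn {β : ℝ} (hβ : β ≠ 0) :
    StrictAntiOn (fun x => phi 0 β x / x) (Ioi 0) := by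
  intro x hx y hy hxy
  simp only [phi_zero_div_eq]
  have := nullSingletonClass_gaussianReal (μ := 0) one_ne_zero
  refine integral_lt_integral_of_ae_lt ((integrable_tanh_sq_comp (by fun_prop)).div_const _)
    ((integrable_tanh_sq_comp (by fun_prop)).div_const _) ?_
  filter_upwards [Measure.ae_ne _ 0] with z hz
  exact Real.tanh_sq_mul_sqrt_div_strictAntiOn (mul_ne_zero hβ hz) hx hy hxy

theorem tendsto_phi_zero_div (β : ℝ) :
    Tendsto (fun x => phi 0 β x / x) (𝓝[>] 0) (𝓝 (β ^ 2)) := by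
  simp only [phi_zero_div_eq]
  have hlim := tendsto_integral_filter_of_dominated_convergence (μ := gaussianReal 0 1)
    (F := fun x z => Real.tanh (β * z * √x) ^ 2 / x) (l := 𝓝[>] 0) (f := fun z => (β * z) ^ 2)
    (fun z => (β * z) ^ 2)
    (.of_forall fun x => ((integrable_tanh_sq_comp (by fun_prop)).div_const _).aestronglyMeasurable)
    (eventually_mem_nhdsWithin.mono fun x (hx : 0 < x) => ae_of_all _ fun z => by
      rw [Real.norm_of_nonneg (by positivity)]
      exact Real.tanh_sq_mul_sqrt_div_le _ _)
    ?_ (ae_of_all _ fun z => Real.tendsto_tanh_sq_mul_sqrt_div _)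
  · simpa [mul_pow, integral_const_mul, integral_sq_gaussianReal_zero] using hlim
  · simpa [mul_pow] using
      ((memLp_id_gaussianReal (μ := 0) (v := 1) 2).integrable_sq).const_mul (β ^ 2)

theorem phi_zero_lt_self {β x : ℝ} (hβ : |β| ≤ 1) (hx : 0 < x) : phi 0 β x < x := by
  rcases eq_or_ne β 0 with rfl | hβ0
  · simpa [phi] using hx
  have h := (phi_zero_div_strictAntiOn hβ0).lt_of_tendsto_nhdsGT (tendsto_phi_zero_div β) hx
  exact (div_lt_one hx).1 (h.trans_le ((sq_le_one_iff_abs_le_one β).2 hβ))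

/-- For `h = 0`: if `|β| ≤ 1`, then `0` is the only fixed point of `φ` on `[0,∞)` and
`φ(x) < x` for all `x > 0`. If `|β| > 1`, then `φ` has exactly the two fixed points `0` and
some `q > 0`, with `φ(x) > x` on `(0,q)` and `φ(x) < x` on `(q,∞)`. -/
theorem stmt4 (β : ℝ) :
    (|β| ≤ 1 →
      (phi 0 β 0 = 0 ∧ (∀ x, 0 ≤ x → phi 0 β x = x → x = 0)) ∧
      ∀ x, 0 < x → phi 0 β x < x) ∧
    (1 < |β| →
      ∃ q : ℝ, 0 < q ∧ phi 0 β 0 = 0 ∧ phi 0 β q = q ∧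
        (∀ x, 0 ≤ x → phi 0 β x = x → x = 0 ∨ x = q) ∧
        (∀ x, 0 < x → x < q → x < phi 0 β x) ∧
        (∀ x, q < x → phi 0 β x < x)) := by
  refine ⟨fun hβ => ⟨⟨phi_zero_zero β, fun x hx hfix => ?_⟩, fun x => phi_zero_lt_self hβ⟩,
    fun hβ => ?_⟩
  · by_contra hx0
    exact (phi_zero_lt_self hβ (hx.lt_of_ne' hx0)).ne hfix
  have hβ0 : β ≠ 0 := by
    rintro rfl
    norm_num at hβ
  obtain ⟨q, hq0, hfq, huniq, below, above⟩ := exists_pos_fixedPoint_of_div_strictAntiOn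
    (phi_zero_div_strictAntiOn hβ0) (continuous_phi 0 β).continuousOn (tendsto_phi_zero_div β)
    (one_lt_sq_iff_one_lt_abs β |>.2 hβ) two_pos ((phi_le_one 0 β 2).trans_lt one_lt_two)
  exact ⟨q, hq0, phi_zero_zero β, hfq,
    fun x hx hfix => hx.eq_or_lt.imp Eq.symm fun hx0 => huniq x hx0 hfix, below, above⟩
end

section
/- Let (X,Y) be a centered bivariate Gaussian vector and f, g : ℝ → ℝ be C² functions, bounded with two bounded derivatives. Then ∂/∂Var(X) E[f(X)g(Y)] = (1/2) E[f''(X)g(Y)], with the covariance and Var(Y) held fixed. -/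
/-!
Realize `X = a z₁` and `Y = b z₁ + c z₂` with independent standard Gaussians `z₁, z₂`, the
coefficients depending smoothly on `t = Var X`. Differentiating under the integral and applying
Gaussian integration by parts `E[z h(z)] = E[h'(z)]` in each coordinate gives
`d/dt E[u(X) v(Y)] = a a' E[u''(X) v(Y)] + (a b)' E[u'(X) v'(Y)] + (b b' + c c') E[u(X) v''(Y)]`.
Since `a² = Var X = t`, `a b = Cov(X, Y)` and `b² + c² = Var Y`, the last two coefficients vanish
and `a a' = 1/2`.
-/

open MeasureTheory ProbabilityTheory

/-- Expectation of `F (X, Y)` where `(X, Y)` is a centered bivariate Gaussian with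
`Var X = t₂`, `Var Y = t₃`, `Cov(X,Y) = t₁`, realized via two independent standard
Gaussians `z₁, z₂` as `X = √t₂ z₁`, `Y = (t₁/√t₂) z₁ + √(t₃ − t₁²/t₂) z₂`. -/
noncomputable def Egauss2 (F : ℝ → ℝ → ℝ) (t₁ t₂ t₃ : ℝ) : ℝ :=
  ∫ z₁, ∫ z₂,
    F (Real.sqrt t₂ * z₁)
      (t₁ / Real.sqrt t₂ * z₁ + Real.sqrt (t₃ - t₁ ^ 2 / t₂) * z₂)
    ∂(gaussianReal 0 1) ∂(gaussianReal 0 1)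

open Filter Topology

lemma integrable_gaussianReal_iff {μ : ℝ} {v : NNReal} (hv : v ≠ 0) {h : ℝ → ℝ} :
    Integrable h (gaussianReal μ v) ↔ Integrable (fun x => gaussianPDFReal μ v x * h x) := by
  rw [gaussianReal_of_var_ne_zero μ hv,
    integrable_withDensity_iff_integrable_smul' (measurable_gaussianPDF μ v)
      (ae_of_all _ fun _ => gaussianPDF_lt_top)]
  simp only [toReal_gaussianPDF, smul_eq_mul]

lemma integrable_id_gaussianReal {μ : ℝ} {v : NNReal} : Integrable id (gaussianReal μ v) :=
  (memLp_id_gaussianReal 1).integrable (by simp)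

lemma hasDerivAt_gaussianPDFReal_zero_one (x : ℝ) :
    HasDerivAt (gaussianPDFReal 0 1) (-x * gaussianPDFReal 0 1 x) x := by
  have e : gaussianPDFReal 0 1 = fun x => (√(2 * Real.pi))⁻¹ * Real.exp (-x ^ 2 / 2) := by
    ext y; simp [gaussianPDFReal_def]
  have h : HasDerivAt (fun x : ℝ => -x ^ 2 / 2) (-x) x :=
    ((hasDerivAt_pow 2 x).neg.div_const 2).congr_deriv (by ring)
  rw [e]
  exact (h.exp.const_mul _).congr_deriv (by ring)

theorem integral_mul_eq_integral_deriv_gaussianReal {h h' : ℝ → ℝ}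
    (hd : ∀ x, HasDerivAt h (h' x) x) (hb : ∃ C, ∀ x, |h x| ≤ C) (hb' : ∃ C, ∀ x, |h' x| ≤ C) :
    ∫ x, x * h x ∂gaussianReal 0 1 = ∫ x, h' x ∂gaussianReal 0 1 := by
  obtain ⟨C, hC⟩ := hb
  obtain ⟨C', hC'⟩ := hb'
  obtain rfl : h' = deriv h := funext fun x => (hd x).deriv.symm
  have hcont : Continuous h := continuous_iff_continuousAt.2 fun x => (hd x).continuousAt
  have hint_mul : Integrable (fun x => x * h x) (gaussianReal 0 1) :=
    integrable_id_gaussianReal.mul_bdd hcont.aestronglyMeasurable (ae_of_all _ hC)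
  have hint_deriv : Integrable (deriv h) (gaussianReal 0 1) :=
    .of_bound (measurable_deriv h).aestronglyMeasurable C' (ae_of_all _ hC')
  have hint : Integrable h (gaussianReal 0 1) :=
    .of_bound hcont.aestronglyMeasurable C (ae_of_all _ hC)
  rw [integrable_gaussianReal_iff one_ne_zero] at hint_mul hint_deriv hint
  have ibp := integral_mul_deriv_eq_deriv_mul_of_integrable (fun x _ => hd x)
    (fun x _ => hasDerivAt_gaussianPDFReal_zero_one x)
    (hint_mul.neg.congr (ae_of_all _ fun x => by simp only [Pi.mul_apply, Pi.neg_apply]; ring))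
    (hint_deriv.congr (ae_of_all _ fun _ => mul_comm _ _))
    (hint.congr (ae_of_all _ fun _ => mul_comm _ _))
  simp only [integral_gaussianReal_eq_integral_smul one_ne_zero, smul_eq_mul]
  calc ∫ x, gaussianPDFReal 0 1 x * (x * h x)
      = -∫ x, h x * (-x * gaussianPDFReal 0 1 x) := by
        rw [← integral_neg]; congr 1; ext x; ring
    _ = ∫ x, gaussianPDFReal 0 1 x * deriv h x := by
        rw [ibp, neg_neg]; congr 1; ext x; ring

section Prod

variable {α : Type*} [MeasurableSpace α] {ν : Measure α} [IsFiniteMeasure ν]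

lemma integrable_fst_mul_prod_gaussianReal {H : ℝ × α → ℝ}
    (hH : AEStronglyMeasurable H ((gaussianReal 0 1).prod ν)) (hb : ∃ C, ∀ z, |H z| ≤ C) :
    Integrable (fun z => z.1 * H z) ((gaussianReal 0 1).prod ν) :=
  (integrable_id_gaussianReal.comp_fst ν).mul_bdd hH (ae_of_all _ hb.choose_spec)

lemma integrable_snd_mul_prod_gaussianReal {H : α × ℝ → ℝ}
    (hH : AEStronglyMeasurable H (ν.prod (gaussianReal 0 1))) (hb : ∃ C, ∀ z, |H z| ≤ C) :
    Integrable (fun z => z.2 * H z) (ν.prod (gaussianReal 0 1)) :=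
  (integrable_id_gaussianReal.comp_snd ν).mul_bdd hH (ae_of_all _ hb.choose_spec)

theorem integral_fst_mul_prod_gaussianReal {H H₁ : ℝ × α → ℝ}
    (hH : AEStronglyMeasurable H ((gaussianReal 0 1).prod ν))
    (hH₁ : AEStronglyMeasurable H₁ ((gaussianReal 0 1).prod ν))
    (hd : ∀ x y, HasDerivAt (fun x => H (x, y)) (H₁ (x, y)) x)
    (hb : ∃ C, ∀ z, |H z| ≤ C) (hb₁ : ∃ C, ∀ z, |H₁ z| ≤ C) :
    ∫ z, z.1 * H z ∂(gaussianReal 0 1).prod ν = ∫ z, H₁ z ∂(gaussianReal 0 1).prod ν := by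
  obtain ⟨C, hC⟩ := hb
  obtain ⟨C₁, hC₁⟩ := hb₁
  rw [integral_prod_symm _ (integrable_fst_mul_prod_gaussianReal hH ⟨C, hC⟩),
    integral_prod_symm _ (.of_bound hH₁ C₁ (ae_of_all _ hC₁))]
  congr 1 with y
  exact integral_mul_eq_integral_deriv_gaussianReal (fun x => hd x y) ⟨C, fun _ => hC _⟩
    ⟨C₁, fun _ => hC₁ _⟩

theorem integral_snd_mul_prod_gaussianReal {H H₂ : α × ℝ → ℝ}
    (hH : AEStronglyMeasurable H (ν.prod (gaussianReal 0 1)))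
    (hH₂ : AEStronglyMeasurable H₂ (ν.prod (gaussianReal 0 1)))
    (hd : ∀ x y, HasDerivAt (fun y => H (x, y)) (H₂ (x, y)) y)
    (hb : ∃ C, ∀ z, |H z| ≤ C) (hb₂ : ∃ C, ∀ z, |H₂ z| ≤ C) :
    ∫ z, z.2 * H z ∂ν.prod (gaussianReal 0 1) = ∫ z, H₂ z ∂ν.prod (gaussianReal 0 1) := by
  obtain ⟨C, hC⟩ := hb
  obtain ⟨C₂, hC₂⟩ := hb₂
  rw [integral_prod _ (integrable_snd_mul_prod_gaussianReal hH ⟨C, hC⟩),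
    integral_prod _ (.of_bound hH₂ C₂ (ae_of_all _ hC₂))]
  congr 1 with x
  exact integral_mul_eq_integral_deriv_gaussianReal (hd x) ⟨C, fun _ => hC _⟩
    ⟨C₂, fun _ => hC₂ _⟩

end Prod

def ContDiffBdd (n : ℕ) (u : ℝ → ℝ) : Prop :=
  ContDiff ℝ n u ∧ ∀ k ≤ n, ∃ C, ∀ x, |iteratedDeriv k u x| ≤ C

namespace ContDiffBdd

variable {n : ℕ} {u : ℝ → ℝ}

lemma continuous (hu : ContDiffBdd n u) : Continuous u := hu.1.continuous

lemma exists_abs_le (hu : ContDiffBdd n u) : ∃ C, ∀ x, |u x| ≤ C := by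
  simpa using hu.2 0 n.zero_le

lemma differentiable (hu : ContDiffBdd (n + 1) u) : Differentiable ℝ u :=
  hu.1.differentiable (by simp)

lemma of_succ (hu : ContDiffBdd (n + 1) u) : ContDiffBdd n u :=
  ⟨hu.1.of_succ, fun k hk => hu.2 k (by omega)⟩

protected lemma deriv (hu : ContDiffBdd (n + 1) u) : ContDiffBdd n (deriv u) :=
  ⟨hu.1.deriv', fun k hk => by simpa [iteratedDeriv_succ'] using hu.2 (k + 1) (by omega)⟩

end ContDiffBdd

lemma ContDiffAt.exists_eventually_hasDerivAt_abs_deriv_le {a : ℝ → ℝ} {t₀ : ℝ}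
    (ha : ContDiffAt ℝ 1 a t₀) :
    ∃ M, ∀ᶠ t in 𝓝 t₀, HasDerivAt a (deriv a t) t ∧ |deriv a t| ≤ M := by
  have hcont : ContinuousAt (deriv a) t₀ := (ha.derivWithin (m := 0) (by simp)).continuousAt
  refine ⟨|deriv a t₀| + 1, ?_⟩
  filter_upwards [ha.eventually (by simp), hcont.abs.eventually (gt_mem_nhds (lt_add_one _))]
    with t ht hle
  exact ⟨(ht.differentiableAt one_ne_zero).hasDerivAt, hle.le⟩

local notation "γ₂" => Measure.prod (gaussianReal 0 1) (gaussianReal 0 1)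

def pairIntegrand (u v : ℝ → ℝ) (a b c : ℝ) (z : ℝ × ℝ) : ℝ :=
  u (a * z.1) * v (b * z.1 + c * z.2)

noncomputable def pairExpectation (u v : ℝ → ℝ) (a b c : ℝ) : ℝ :=
  ∫ z, pairIntegrand u v a b c z ∂γ₂

section PairIntegrand

variable {u v : ℝ → ℝ} {n m : ℕ}

lemma continuous_pairIntegrand (hu : Continuous u) (hv : Continuous v) (a b c : ℝ) :
    Continuous (pairIntegrand u v a b c) := by
  unfold pairIntegrand; fun_prop

lemma exists_abs_pairIntegrand_le (hu : ∃ C, ∀ x, |u x| ≤ C) (hv : ∃ C, ∀ x, |v x| ≤ C) :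
    ∃ C, ∀ a b c z, |pairIntegrand u v a b c z| ≤ C := by
  obtain ⟨Cu, hCu⟩ := hu
  obtain ⟨Cv, hCv⟩ := hv
  refine ⟨Cu * Cv, fun a b c z => ?_⟩
  rw [pairIntegrand, abs_mul]
  exact mul_le_mul (hCu _) (hCv _) (abs_nonneg _) ((abs_nonneg _).trans (hCu 0))

lemma hasDerivAt_pairIntegrand_fst (hu : Differentiable ℝ u) (hv : Differentiable ℝ v)
    (a b c x y : ℝ) :
    HasDerivAt (fun x => pairIntegrand u v a b c (x, y))
      (a * pairIntegrand (deriv u) v a b c (x, y) + b * pairIntegrand u (deriv v) a b c (x, y))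
      x := by
  have hX : HasDerivAt (fun x => a * x) a x := by simpa using (hasDerivAt_id x).const_mul a
  have hY : HasDerivAt (fun x => b * x + c * y) b x := by
    simpa using ((hasDerivAt_id x).const_mul b).add_const (c * y)
  exact (((hu _).hasDerivAt.comp x hX).mul ((hv _).hasDerivAt.comp x hY)).congr_deriv
    (by simp only [pairIntegrand, Function.comp_apply]; ring)

lemma hasDerivAt_pairIntegrand_snd (hv : Differentiable ℝ v) (a b c x y : ℝ) :
    HasDerivAt (fun y => pairIntegrand u v a b c (x, y))
      (c * pairIntegrand u (deriv v) a b c (x, y)) y := by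
  have hY : HasDerivAt (fun y => b * x + c * y) c y := by
    simpa using ((hasDerivAt_id y).const_mul c).const_add (b * x)
  exact (((hv _).hasDerivAt.comp y hY).const_mul (u (a * x))).congr_deriv
    (by simp only [pairIntegrand]; ring)

lemma integrable_pairIntegrand (hu : ContDiffBdd n u) (hv : ContDiffBdd m v) (a b c : ℝ) :
    Integrable (pairIntegrand u v a b c) γ₂ :=
  have ⟨C, hC⟩ := exists_abs_pairIntegrand_le hu.exists_abs_le hv.exists_abs_le
  .of_bound (continuous_pairIntegrand hu.continuous hv.continuous a b c).aestronglyMeasurable C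
    (ae_of_all _ (hC a b c))

lemma integrable_fst_mul_pairIntegrand (hu : ContDiffBdd n u) (hv : ContDiffBdd m v)
    (a b c : ℝ) : Integrable (fun z => z.1 * pairIntegrand u v a b c z) γ₂ :=
  have ⟨C, hC⟩ := exists_abs_pairIntegrand_le hu.exists_abs_le hv.exists_abs_le
  integrable_fst_mul_prod_gaussianReal
    (continuous_pairIntegrand hu.continuous hv.continuous a b c).aestronglyMeasurable
    ⟨C, hC a b c⟩

lemma integrable_snd_mul_pairIntegrand (hu : ContDiffBdd n u) (hv : ContDiffBdd m v)
    (a b c : ℝ) : Integrable (fun z => z.2 * pairIntegrand u v a b c z) γ₂ :=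
  have ⟨C, hC⟩ := exists_abs_pairIntegrand_le hu.exists_abs_le hv.exists_abs_le
  integrable_snd_mul_prod_gaussianReal
    (continuous_pairIntegrand hu.continuous hv.continuous a b c).aestronglyMeasurable
    ⟨C, hC a b c⟩

theorem integral_fst_mul_pairIntegrand (hu : ContDiffBdd 1 u) (hv : ContDiffBdd 1 v) (a b c : ℝ) :
    ∫ z, z.1 * pairIntegrand u v a b c z ∂γ₂
      = a * pairExpectation (deriv u) v a b c + b * pairExpectation u (deriv v) a b c := by
  obtain ⟨C, hC⟩ := exists_abs_pairIntegrand_le hu.exists_abs_le hv.exists_abs_le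
  obtain ⟨C₁, hC₁⟩ := exists_abs_pairIntegrand_le hu.deriv.exists_abs_le hv.exists_abs_le
  obtain ⟨C₂, hC₂⟩ := exists_abs_pairIntegrand_le hu.exists_abs_le hv.deriv.exists_abs_le
  rw [integral_fst_mul_prod_gaussianReal
      (H₁ := fun z =>
        a * pairIntegrand (deriv u) v a b c z + b * pairIntegrand u (deriv v) a b c z)
      (continuous_pairIntegrand hu.continuous hv.continuous a b c).aestronglyMeasurable
      (((continuous_pairIntegrand hu.deriv.continuous hv.continuous a b c).const_mul a).add
        ((continuous_pairIntegrand hu.continuous hv.deriv.continuous a b c).const_mul b)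
        ).aestronglyMeasurable
      (hasDerivAt_pairIntegrand_fst hu.differentiable hv.differentiable a b c)
      ⟨C, hC a b c⟩ ?_,
    integral_add ((integrable_pairIntegrand hu.deriv hv a b c).const_mul a)
      ((integrable_pairIntegrand hu hv.deriv a b c).const_mul b),
    integral_const_mul, integral_const_mul, pairExpectation, pairExpectation]
  refine ⟨|a| * C₁ + |b| * C₂, fun z => (abs_add_le _ _).trans ?_⟩
  rw [abs_mul, abs_mul]
  gcongr
  exacts [hC₁ a b c z, hC₂ a b c z]

theorem integral_snd_mul_pairIntegrand (hu : ContDiffBdd n u) (hv : ContDiffBdd 1 v) (a b c : ℝ) :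
    ∫ z, z.2 * pairIntegrand u v a b c z ∂γ₂ = c * pairExpectation u (deriv v) a b c := by
  obtain ⟨C, hC⟩ := exists_abs_pairIntegrand_le hu.exists_abs_le hv.exists_abs_le
  obtain ⟨C₂, hC₂⟩ := exists_abs_pairIntegrand_le hu.exists_abs_le hv.deriv.exists_abs_le
  rw [integral_snd_mul_prod_gaussianReal
      (continuous_pairIntegrand hu.continuous hv.continuous a b c).aestronglyMeasurable
      (((continuous_pairIntegrand hu.continuous hv.deriv.continuous a b c).const_mul c
        ).aestronglyMeasurable)
      (hasDerivAt_pairIntegrand_snd hv.differentiable a b c)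
      ⟨C, hC a b c⟩
      ⟨|c| * C₂, fun z => by rw [abs_mul]; gcongr; exact hC₂ a b c z⟩,
    integral_const_mul, pairExpectation]

end PairIntegrand

section Differentiation

variable {u v : ℝ → ℝ}

lemma hasDerivAt_pairIntegrand (hu : Differentiable ℝ u) (hv : Differentiable ℝ v)
    {a b c : ℝ → ℝ} {a' b' c' t : ℝ} (ha : HasDerivAt a a' t) (hb : HasDerivAt b b' t)
    (hc : HasDerivAt c c' t) (z : ℝ × ℝ) :
    HasDerivAt (fun t => pairIntegrand u v (a t) (b t) (c t) z)
      (a' * z.1 * pairIntegrand (deriv u) v (a t) (b t) (c t) z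
        + (b' * z.1 + c' * z.2) * pairIntegrand u (deriv v) (a t) (b t) (c t) z) t :=
  (((hu _).hasDerivAt.comp t (ha.mul_const z.1)).mul
    ((hv _).hasDerivAt.comp t ((hb.mul_const z.1).add (hc.mul_const z.2)))).congr_deriv
    (by simp only [pairIntegrand, Function.comp_apply, Pi.add_apply]; ring)

theorem hasDerivAt_pairExpectation_eq_integral (hu : ContDiffBdd 1 u) (hv : ContDiffBdd 1 v)
    {a b c : ℝ → ℝ} {t₀ : ℝ} (ha : ContDiffAt ℝ 1 a t₀) (hb : ContDiffAt ℝ 1 b t₀)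
    (hc : ContDiffAt ℝ 1 c t₀) :
    HasDerivAt (fun t => pairExpectation u v (a t) (b t) (c t))
      (∫ z, deriv a t₀ * z.1 * pairIntegrand (deriv u) v (a t₀) (b t₀) (c t₀) z
        + (deriv b t₀ * z.1 + deriv c t₀ * z.2)
          * pairIntegrand u (deriv v) (a t₀) (b t₀) (c t₀) z ∂γ₂) t₀ := by
  obtain ⟨Ma, hMa⟩ := ha.exists_eventually_hasDerivAt_abs_deriv_le
  obtain ⟨Mb, hMb⟩ := hb.exists_eventually_hasDerivAt_abs_deriv_le
  obtain ⟨Mc, hMc⟩ := hc.exists_eventually_hasDerivAt_abs_deriv_le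
  obtain ⟨C₁, hC₁⟩ := exists_abs_pairIntegrand_le hu.deriv.exists_abs_le hv.exists_abs_le
  obtain ⟨C₂, hC₂⟩ := exists_abs_pairIntegrand_le hu.exists_abs_le hv.deriv.exists_abs_le
  have hC₁0 : 0 ≤ C₁ := (abs_nonneg _).trans (hC₁ 0 0 0 0)
  have hC₂0 : 0 ≤ C₂ := (abs_nonneg _).trans (hC₂ 0 0 0 0)
  have habs₁ : Integrable (fun z : ℝ × ℝ => |z.1|) γ₂ :=
    integrable_id_gaussianReal.abs.comp_fst _
  have habs₂ : Integrable (fun z : ℝ × ℝ => |z.2|) γ₂ :=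
    integrable_id_gaussianReal.abs.comp_snd _
  have hP₁ := continuous_pairIntegrand hu.deriv.continuous hv.continuous (a t₀) (b t₀) (c t₀)
  have hP₂ := continuous_pairIntegrand hu.continuous hv.deriv.continuous (a t₀) (b t₀) (c t₀)
  refine (hasDerivAt_integral_of_dominated_loc_of_deriv_le (hMa.and (hMb.and hMc))
    (F := fun t z => pairIntegrand u v (a t) (b t) (c t) z)
    (bound := fun z => Ma * |z.1| * C₁ + (Mb * |z.1| + Mc * |z.2|) * C₂)
    (.of_forall fun t =>
      (continuous_pairIntegrand hu.continuous hv.continuous _ _ _).aestronglyMeasurable)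
    (integrable_pairIntegrand hu hv _ _ _) (by fun_prop) ?_
    (((habs₁.const_mul Ma).mul_const C₁).add
      (((habs₁.const_mul Mb).add (habs₂.const_mul Mc)).mul_const C₂))
    (ae_of_all _ fun z t ⟨⟨ha', _⟩, ⟨hb', _⟩, ⟨hc', _⟩⟩ =>
      hasDerivAt_pairIntegrand hu.differentiable hv.differentiable ha' hb' hc' z)).2
  refine ae_of_all _ fun z t ⟨⟨_, hat⟩, ⟨_, hbt⟩, ⟨_, hct⟩⟩ => ?_
  have hMa0 : 0 ≤ Ma := (abs_nonneg _).trans hat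
  have hMb0 : 0 ≤ Mb := (abs_nonneg _).trans hbt
  have hMc0 : 0 ≤ Mc := (abs_nonneg _).trans hct
  rw [Real.norm_eq_abs]
  refine (abs_add_le _ _).trans (add_le_add ?_ ?_)
  · rw [abs_mul, abs_mul]
    gcongr
    exact hC₁ _ _ _ _
  · rw [abs_mul]
    gcongr
    · exact (abs_add_le _ _).trans (by rw [abs_mul, abs_mul]; gcongr)
    · exact hC₂ _ _ _ _

theorem hasDerivAt_pairExpectation (hu : ContDiffBdd 2 u) (hv : ContDiffBdd 2 v)
    {a b c : ℝ → ℝ} {t₀ : ℝ} (ha : ContDiffAt ℝ 1 a t₀) (hb : ContDiffAt ℝ 1 b t₀)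
    (hc : ContDiffAt ℝ 1 c t₀) :
    HasDerivAt (fun t => pairExpectation u v (a t) (b t) (c t))
      (a t₀ * deriv a t₀ * pairExpectation (deriv (deriv u)) v (a t₀) (b t₀) (c t₀)
        + (deriv a t₀ * b t₀ + a t₀ * deriv b t₀)
          * pairExpectation (deriv u) (deriv v) (a t₀) (b t₀) (c t₀)
        + (b t₀ * deriv b t₀ + c t₀ * deriv c t₀)
          * pairExpectation u (deriv (deriv v)) (a t₀) (b t₀) (c t₀)) t₀ := by
  refine (hasDerivAt_pairExpectation_eq_integral hu.of_succ hv.of_succ ha hb hc).congr_deriv ?_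
  have h₁ := (integrable_fst_mul_pairIntegrand hu.deriv hv (a t₀) (b t₀) (c t₀)).const_mul
    (deriv a t₀)
  have h₂ := (integrable_fst_mul_pairIntegrand hu hv.deriv (a t₀) (b t₀) (c t₀)).const_mul
    (deriv b t₀)
  have h₃ := (integrable_snd_mul_pairIntegrand hu hv.deriv (a t₀) (b t₀) (c t₀)).const_mul
    (deriv c t₀)
  calc _ = ∫ z, deriv a t₀ * (z.1 * pairIntegrand (deriv u) v (a t₀) (b t₀) (c t₀) z)
        + deriv b t₀ * (z.1 * pairIntegrand u (deriv v) (a t₀) (b t₀) (c t₀) z)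
        + deriv c t₀ * (z.2 * pairIntegrand u (deriv v) (a t₀) (b t₀) (c t₀) z) ∂γ₂ := by
        congr 1 with z; ring
    _ = _ := by
        rw [integral_add (h₁.fun_add h₂) h₃, integral_add h₁ h₂, integral_const_mul,
          integral_const_mul, integral_const_mul,
          integral_fst_mul_pairIntegrand hu.deriv hv.of_succ,
          integral_fst_mul_pairIntegrand hu.of_succ hv.deriv,
          integral_snd_mul_pairIntegrand hu hv.deriv]
        ring

theorem hasDerivAt_pairExpectation_of_cov_const (hu : ContDiffBdd 2 u) (hv : ContDiffBdd 2 v)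
    {a b c : ℝ → ℝ} {t₀ κ σ : ℝ} (ha : ContDiffAt ℝ 1 a t₀) (hb : ContDiffAt ℝ 1 b t₀)
    (hc : ContDiffAt ℝ 1 c t₀) (haa : ∀ᶠ t in 𝓝 t₀, a t * a t = t)
    (hab : ∀ᶠ t in 𝓝 t₀, a t * b t = κ) (hbc : ∀ᶠ t in 𝓝 t₀, b t * b t + c t * c t = σ) :
    HasDerivAt (fun t => pairExpectation u v (a t) (b t) (c t))
      (1 / 2 * pairExpectation (deriv (deriv u)) v (a t₀) (b t₀) (c t₀)) t₀ := by
  have ha' := (ha.differentiableAt one_ne_zero).hasDerivAt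
  have hb' := (hb.differentiableAt one_ne_zero).hasDerivAt
  have hc' := (hc.differentiableAt one_ne_zero).hasDerivAt
  have e₁ := (ha'.mul ha').unique ((hasDerivAt_id t₀).congr_of_eventuallyEq haa)
  have e₂ := (ha'.mul hb').unique ((hasDerivAt_const t₀ κ).congr_of_eventuallyEq hab)
  have e₃ := ((hb'.mul hb').add (hc'.mul hc')).unique
    ((hasDerivAt_const t₀ σ).congr_of_eventuallyEq hbc)
  refine (hasDerivAt_pairExpectation hu hv ha hb hc).congr_deriv ?_
  linear_combination (pairExpectation (deriv (deriv u)) v (a t₀) (b t₀) (c t₀) / 2) * e₁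
    + pairExpectation (deriv u) (deriv v) (a t₀) (b t₀) (c t₀) * e₂
    + (pairExpectation u (deriv (deriv v)) (a t₀) (b t₀) (c t₀) / 2) * e₃

end Differentiation

lemma Egauss2_mul_eq_pairExpectation {u v : ℝ → ℝ} {n m : ℕ} (hu : ContDiffBdd n u)
    (hv : ContDiffBdd m v) (t₁ t₂ t₃ : ℝ) :
    Egauss2 (fun x y => u x * v y) t₁ t₂ t₃
      = pairExpectation u v (Real.sqrt t₂) (t₁ / Real.sqrt t₂) (Real.sqrt (t₃ - t₁ ^ 2 / t₂)) :=
  (integral_prod _ (integrable_pairIntegrand hu hv _ _ _)).symm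

theorem stmt10_general (f g : ℝ → ℝ) (hf : ContDiff ℝ 2 f) (hg : ContDiff ℝ 2 g)
    (hfb : ∀ k ≤ 2, ∃ C, ∀ x, |iteratedDeriv k f x| ≤ C)
    (hgb : ∀ k ≤ 2, ∃ C, ∀ x, |iteratedDeriv k g x| ≤ C)
    (t₁ t₂ t₃ : ℝ) (h₂ : 0 < t₂) (h₁ : |t₁| < Real.sqrt (t₂ * t₃)) :
    HasDerivAt (fun t => Egauss2 (fun x y => f x * g y) t₁ t t₃)
      (1 / 2 * Egauss2 (fun x y => deriv (deriv f) x * g y) t₁ t₂ t₃) t₂ := by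
  have hfd : ContDiffBdd 2 f := ⟨hf, hfb⟩
  have hgd : ContDiffBdd 2 g := ⟨hg, hgb⟩
  have hc₀ : 0 < t₃ - t₁ ^ 2 / t₂ := by
    have h := (Real.lt_sqrt (abs_nonneg t₁)).1 h₁
    rw [sq_abs] at h
    rw [sub_pos, div_lt_iff₀ h₂]
    linarith
  have hinv : ContDiffAt ℝ 1 (fun t => t₃ - t₁ ^ 2 / t) t₂ :=
    contDiffAt_const.sub (contDiffAt_const.div contDiffAt_id h₂.ne')
  have hpos : ∀ᶠ t in 𝓝 t₂, 0 < t ∧ 0 < t₃ - t₁ ^ 2 / t :=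
    (eventually_gt_nhds h₂).and (hinv.continuousAt.eventually (lt_mem_nhds hc₀))
  simp only [Egauss2_mul_eq_pairExpectation hfd hgd,
    Egauss2_mul_eq_pairExpectation hfd.deriv.deriv hgd]
  refine hasDerivAt_pairExpectation_of_cov_const (κ := t₁) (σ := t₃) hfd hgd
    (Real.contDiffAt_sqrt h₂.ne') (contDiffAt_const.div (Real.contDiffAt_sqrt h₂.ne')
      (Real.sqrt_ne_zero'.2 h₂)) (hinv.sqrt hc₀.ne') ?_ ?_ ?_
    <;> filter_upwards [hpos] with t ⟨ht, hct⟩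
  · exact Real.mul_self_sqrt ht.le
  · field_simp [Real.sqrt_ne_zero'.2 ht]
  · rw [Real.mul_self_sqrt hct.le, div_mul_div_comm, Real.mul_self_sqrt ht.le]
    ring

/-- For `(X,Y)` centered bivariate Gaussian and `f, g` bounded `C²` functions with bounded
derivatives, `∂/∂Var(X) E[f(X) g(Y)] = (1/2) E[f''(X) g(Y)]` (covariance and `Var Y` fixed). -/
theorem stmt10 (f g : ℝ → ℝ) (hf : ContDiff ℝ 2 f) (hg : ContDiff ℝ 2 g)
    (hfb : ∀ k ≤ 2, ∃ C, ∀ x, |iteratedDeriv k f x| ≤ C)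
    (hgb : ∀ k ≤ 2, ∃ C, ∀ x, |iteratedDeriv k g x| ≤ C)
    (t₁ t₂ t₃ : ℝ) (h₂ : 0 < t₂) (h₃ : 0 < t₃) (h₁ : |t₁| < Real.sqrt (t₂ * t₃)) :
    HasDerivAt (fun t => Egauss2 (fun x y => f x * g y) t₁ t t₃)
      (1 / 2 * Egauss2 (fun x y => deriv (deriv f) x * g y) t₁ t₂ t₃) t₂ :=
  stmt10_general f g hf hg hfb hgb t₁ t₂ t₃ h₂ h₁
end

section
/- Let g : ℝ → ℝ be even, integrable against Gaussians, decreasing on [0,∞), with bounded derivative, and let X be a centered Gaussian with variance σ² > 0. Then the function h ↦ E[g(h + X)] is increasing on (−∞,0], decreasing on [0,∞), and hence maximal at h = 0. -/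
/-!
Translating a centred Gaussian by `h` multiplies its law by the likelihood ratio
`exp (h x / v - h² / (2 v))`. As `g` and the Gaussian are even, this ratio may be averaged over
`±h`, so that `E[g(h + X)] = E[w_h(X) g(X)]` with `w_h(x) = exp (-h² / (2 v)) cosh (h x / v)` and
`E[w_h(X)] = 1`. For `0 ≤ h₁ < h₂` the ratio `w_{h₂} / w_{h₁}` is increasing in `|x|` and unbounded,
so it crosses `1` at some `|x| = y₀`: there `w_{h₁} - w_{h₂}` changes sign from `+` to `-`, as does
`g - g y₀`. Hence `E[(g(X) - g y₀) (w_{h₁} - w_{h₂})(X)] ≥ 0`, which is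
`E[g(h₂ + X)] ≤ E[g(h₁ + X)]`. The rest follows from the evenness of `h ↦ E[g(h + X)]`.
-/

open MeasureTheory ProbabilityTheory Real Set Filter
open scoped NNReal

lemma Function.Even.comp_abs {β : Type*} {f : ℝ → β} (hf : f.Even) (x : ℝ) : f |x| = f x := by
  rcases abs_choice x with hx | hx <;> simp [hx, hf.eq]

lemma Function.Even.monotoneOn_Iic_of_antitoneOn_Ici {β : Type*} [Preorder β]
    {f : ℝ → β} (hf : f.Even) (hanti : AntitoneOn f (Ici 0)) : MonotoneOn f (Iic 0) := by
  intro a ha b hb hab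
  simpa only [hf.eq] using hanti (mem_Ici.2 (neg_nonneg.2 hb)) (mem_Ici.2 (neg_nonneg.2 ha))
    (neg_le_neg hab)

lemma Function.Even.le_apply_zero_of_antitoneOn_Ici {β : Type*} [Preorder β]
    {f : ℝ → β} (hf : f.Even) (hanti : AntitoneOn f (Ici 0)) (x : ℝ) : f x ≤ f 0 := by
  rw [← hf.comp_abs]
  exact hanti self_mem_Ici (abs_nonneg x) (abs_nonneg x)

lemma sub_mul_sub_nonneg_of_antitoneOn_of_monotoneOn {α : Type*} [LinearOrder α] {f r : α → ℝ}
    {s : Set α} (hf : AntitoneOn f s) (hr : MonotoneOn r s) {a b : α} (ha : a ∈ s) (hb : b ∈ s) :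
    0 ≤ (f a - f b) * (r b - r a) := by
  rcases le_total a b with hab | hba
  · exact mul_nonneg (sub_nonneg.2 (hf ha hb hab)) (sub_nonneg.2 (hr ha hb hab))
  · exact mul_nonneg_of_nonpos_of_nonpos (sub_nonpos.2 (hf hb ha hba)) (sub_nonpos.2 (hr hb ha hba))

lemma integral_mul_le_integral_mul_of_sub_mul_sub_nonneg {α : Type*} [MeasurableSpace α]
    {μ : Measure α} {g q₁ q₂ : α → ℝ} (c : ℝ) (hq₁ : Integrable q₁ μ) (hq₂ : Integrable q₂ μ)
    (hgq₁ : Integrable (fun x => q₁ x * g x) μ) (hgq₂ : Integrable (fun x => q₂ x * g x) μ)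
    (hq : ∫ x, q₁ x ∂μ = ∫ x, q₂ x ∂μ) (hsign : ∀ᵐ x ∂μ, 0 ≤ (g x - c) * (q₁ x - q₂ x)) :
    ∫ x, q₂ x * g x ∂μ ≤ ∫ x, q₁ x * g x ∂μ := by
  have expand : ∫ x, (g x - c) * (q₁ x - q₂ x) ∂μ
      = (∫ x, q₁ x * g x ∂μ - ∫ x, q₂ x * g x ∂μ) - c * (∫ x, q₁ x ∂μ - ∫ x, q₂ x ∂μ) := by
    have hd : Integrable (fun x => q₁ x * g x - q₂ x * g x) μ := hgq₁.sub hgq₂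
    have hc : Integrable (fun x => c * (q₁ x - q₂ x)) μ := (hq₁.sub hq₂).const_mul c
    rw [← integral_sub hgq₁ hgq₂, ← integral_sub hq₁ hq₂, ← integral_const_mul,
      ← integral_sub hd hc]
    congr with x
    ring
  have := integral_nonneg_of_ae hsign
  rw [expand, hq, sub_self, mul_zero, sub_zero, sub_nonneg] at this
  exact this

lemma cosh_mul_mul_cosh_mul_le {a b y₁ y₂ : ℝ} (ha : 0 ≤ a) (hab : a ≤ b) (hy₁ : 0 ≤ y₁)
    (hy : y₁ ≤ y₂) : cosh (b * y₁) * cosh (a * y₂) ≤ cosh (b * y₂) * cosh (a * y₁) := by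
  have prod_to_sum : ∀ u w : ℝ, cosh u * cosh w = (cosh (u + w) + cosh (u - w)) / 2 := by
    intro u w; rw [cosh_add, cosh_sub]; ring
  rw [prod_to_sum, prod_to_sum]
  gcongr (?_ + ?_) / 2
  · rw [cosh_le_cosh, abs_of_nonneg (by nlinarith), abs_of_nonneg (by nlinarith)]
    nlinarith
  · rw [cosh_le_cosh, abs_le, abs_of_nonneg (by nlinarith)]
    constructor <;> nlinarith

lemma monotoneOn_cosh_mul_div_cosh_mul {a b : ℝ} (ha : 0 ≤ a) (hab : a ≤ b) :
    MonotoneOn (fun y => cosh (b * y) / cosh (a * y)) (Ici 0) := by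
  intro y₁ hy₁ y₂ _ hy
  rw [div_le_div_iff₀ (cosh_pos _) (cosh_pos _)]
  exact cosh_mul_mul_cosh_mul_le ha hab hy₁ hy

lemma tendsto_cosh_mul_div_cosh_mul_atTop {a b : ℝ} (ha : 0 ≤ a) (hab : a < b) :
    Tendsto (fun y => cosh (b * y) / cosh (a * y)) atTop atTop := by
  have hexp : Tendsto (fun y => exp ((b - a) * y) / 2) atTop atTop :=
    (tendsto_exp_atTop.comp (tendsto_id.const_mul_atTop (sub_pos.2 hab))).atTop_div_const two_pos
  refine tendsto_atTop_mono' atTop ?_ hexp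
  filter_upwards [eventually_ge_atTop 0] with y hy
  have hcosh : cosh ((b - a) * y) * cosh (a * y) ≤ cosh (b * y) := by
    have hsinh : 0 ≤ sinh ((b - a) * y) * sinh (a * y) :=
      mul_nonneg (sinh_nonneg_iff.2 (by nlinarith)) (sinh_nonneg_iff.2 (by positivity))
    have := cosh_add ((b - a) * y) (a * y)
    rw [show (b - a) * y + a * y = b * y by ring] at this
    linarith
  rw [le_div_iff₀ (cosh_pos _)]
  refine le_trans ?_ hcosh
  gcongr
  rw [cosh_eq]
  linarith [exp_pos (-((b - a) * y))]

namespace ProbabilityTheory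

variable {v : ℝ≥0}

instance isNegInvariant_gaussianReal_zero (v : ℝ≥0) : (gaussianReal 0 v).IsNegInvariant :=
  ⟨by simpa [Measure.neg_def] using gaussianReal_map_neg (μ := 0) (v := v)⟩

lemma gaussianPDFReal_eq_mul_exp (μ : ℝ) (v : ℝ≥0) (x : ℝ) :
    gaussianPDFReal μ v x = gaussianPDFReal 0 v x * exp (μ * x / v - μ ^ 2 / (2 * v)) := by
  rw [gaussianPDFReal, gaussianPDFReal, mul_assoc _ (exp _), ← exp_add]
  congr 2
  ring

lemma gaussianReal_eq_withDensity_exp (μ : ℝ) (hv : v ≠ 0) :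
    gaussianReal μ v = (gaussianReal 0 v).withDensity
      fun x => ENNReal.ofReal (exp (μ * x / v - μ ^ 2 / (2 * v))) := by
  rw [gaussianReal_of_var_ne_zero _ hv, gaussianReal_of_var_ne_zero _ hv,
    ← withDensity_mul _ (measurable_gaussianPDF 0 v) (by fun_prop)]
  congr 1
  funext x
  rw [Pi.mul_apply, gaussianPDF, gaussianPDF, ← ENNReal.ofReal_mul (gaussianPDFReal_nonneg _ _ _),
    ← gaussianPDFReal_eq_mul_exp]

lemma gaussianReal_eq_map_addLeft (μ : ℝ) (v : ℝ≥0) :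
    gaussianReal μ v = (gaussianReal 0 v).map (MeasurableEquiv.addLeft μ) := by
  simpa using (gaussianReal_map_const_add (μ := 0) (v := v) μ).symm

lemma integral_const_add_gaussianReal_eq_integral_exp_mul (hv : v ≠ 0) (h : ℝ) (g : ℝ → ℝ) :
    ∫ x, g (h + x) ∂gaussianReal 0 v
      = ∫ x, exp (h * x / v - h ^ 2 / (2 * v)) * g x ∂gaussianReal 0 v := by
  calc ∫ x, g (h + x) ∂gaussianReal 0 v = ∫ x, g x ∂gaussianReal h v := by
        rw [gaussianReal_eq_map_addLeft h, integral_map_equiv]; rfl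
    _ = _ := by
        rw [gaussianReal_eq_withDensity_exp h hv, integral_withDensity_eq_integral_toReal_smul
          (by fun_prop) (ae_of_all _ fun _ => ENNReal.ofReal_lt_top)]
        simp [ENNReal.toReal_ofReal (exp_pos _).le]

lemma integrable_const_add_gaussianReal_iff (hv : v ≠ 0) (h : ℝ) (g : ℝ → ℝ) :
    Integrable (fun x => g (h + x)) (gaussianReal 0 v) ↔
      Integrable (fun x => exp (h * x / v - h ^ 2 / (2 * v)) * g x) (gaussianReal 0 v) := by
  calc Integrable (fun x => g (h + x)) (gaussianReal 0 v) ↔ Integrable g (gaussianReal h v) := by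
        rw [gaussianReal_eq_map_addLeft h, integrable_map_equiv]; rfl
    _ ↔ _ := by
        rw [gaussianReal_eq_withDensity_exp h hv, integrable_withDensity_iff_integrable_smul'
          (by fun_prop) (ae_of_all _ fun _ => ENNReal.ofReal_lt_top)]
        simp [ENNReal.toReal_ofReal (exp_pos _).le]

/-- The mean of the likelihood ratios `dN(±h, v)/dN(0, v)`. -/
noncomputable def gaussianCoshWeight (v : ℝ≥0) (h x : ℝ) : ℝ :=
  exp (-h ^ 2 / (2 * v)) * cosh (h / v * x)

lemma gaussianCoshWeight_pos (v : ℝ≥0) (h x : ℝ) : 0 < gaussianCoshWeight v h x :=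
  mul_pos (exp_pos _) (cosh_pos _)

lemma gaussianCoshWeight_even (v : ℝ≥0) (h : ℝ) : (gaussianCoshWeight v h).Even := by
  intro x
  simp [gaussianCoshWeight]

lemma gaussianCoshWeight_eq (v : ℝ≥0) (h x : ℝ) : gaussianCoshWeight v h x =
    (exp (h * x / v - h ^ 2 / (2 * v)) + exp (-h * x / v - (-h) ^ 2 / (2 * v))) / 2 := by
  rw [gaussianCoshWeight, cosh_eq, mul_div_assoc', mul_add, ← exp_add, ← exp_add]
  ring_nf

variable {g : ℝ → ℝ}

lemma integral_neg_add_gaussianReal (hg : g.Even) (h : ℝ) :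
    ∫ x, g (-h + x) ∂gaussianReal 0 v = ∫ x, g (h + x) ∂gaussianReal 0 v := by
  rw [← integral_neg_eq_self]
  simp only [← neg_add, hg.eq]

lemma integrable_neg_add_gaussianReal (hg : g.Even) {h : ℝ}
    (hint : Integrable (fun x => g (h + x)) (gaussianReal 0 v)) :
    Integrable (fun x => g (-h + x)) (gaussianReal 0 v) := by
  refine hint.comp_neg.congr (ae_of_all _ fun x => ?_)
  simp only
  rw [← hg.eq, neg_add, neg_neg]

lemma integrable_gaussianCoshWeight_mul (hv : v ≠ 0) (hg : g.Even) {h : ℝ}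
    (hint : Integrable (fun x => g (h + x)) (gaussianReal 0 v)) :
    Integrable (fun x => gaussianCoshWeight v h x * g x) (gaussianReal 0 v) := by
  have hpos := (integrable_const_add_gaussianReal_iff hv h g).1 hint
  have hneg := (integrable_const_add_gaussianReal_iff hv (-h) g).1
    (integrable_neg_add_gaussianReal hg hint)
  refine ((hpos.add hneg).div_const 2).congr (ae_of_all _ fun x => ?_)
  simp only [Pi.add_apply, gaussianCoshWeight_eq]
  ring

lemma integral_const_add_gaussianReal_eq_integral_gaussianCoshWeight_mul (hv : v ≠ 0)
    (hg : g.Even) {h : ℝ} (hint : Integrable (fun x => g (h + x)) (gaussianReal 0 v)) :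
    ∫ x, g (h + x) ∂gaussianReal 0 v = ∫ x, gaussianCoshWeight v h x * g x ∂gaussianReal 0 v := by
  have hpos := (integrable_const_add_gaussianReal_iff hv h g).1 hint
  have hneg := (integrable_const_add_gaussianReal_iff hv (-h) g).1
    (integrable_neg_add_gaussianReal hg hint)
  simp only [gaussianCoshWeight_eq, add_mul, add_div, div_mul_eq_mul_div]
  rw [integral_add (hpos.div_const 2) (hneg.div_const 2), integral_div, integral_div,
    ← integral_const_add_gaussianReal_eq_integral_exp_mul hv,
    ← integral_const_add_gaussianReal_eq_integral_exp_mul hv,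
    integral_neg_add_gaussianReal hg]
  ring

lemma integrable_gaussianCoshWeight (hv : v ≠ 0) (h : ℝ) :
    Integrable (gaussianCoshWeight v h) (gaussianReal 0 v) := by
  simpa using integrable_gaussianCoshWeight_mul hv (Function.Even.const (1 : ℝ))
    (integrable_const (1 : ℝ)) (h := h)

lemma integral_gaussianCoshWeight (hv : v ≠ 0) (h : ℝ) :
    ∫ x, gaussianCoshWeight v h x ∂gaussianReal 0 v = 1 := by
  simpa using (integral_const_add_gaussianReal_eq_integral_gaussianCoshWeight_mul hv
    (Function.Even.const (1 : ℝ)) (integrable_const (1 : ℝ)) (h := h)).symm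

lemma exists_forall_sub_mul_gaussianCoshWeight_sub_nonneg (hv : v ≠ 0) (hg : g.Even)
    (hdec : AntitoneOn g (Ici 0)) {h₁ h₂ : ℝ} (h₁0 : 0 ≤ h₁) (h₁₂ : h₁ < h₂) :
    ∃ c, ∀ x, 0 ≤ (g x - c) * (gaussianCoshWeight v h₁ x - gaussianCoshWeight v h₂ x) := by
  set r : ℝ → ℝ := fun y => gaussianCoshWeight v h₂ y / gaussianCoshWeight v h₁ y with hr_def
  have hr : r = fun y => exp (-h₂ ^ 2 / (2 * v)) / exp (-h₁ ^ 2 / (2 * v)) *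
      (cosh (h₂ / v * y) / cosh (h₁ / v * y)) := by
    funext y
    exact mul_div_mul_comm _ _ _ _
  have hab : h₁ / v < h₂ / v := div_lt_div_of_pos_right h₁₂ (by positivity)
  have hmono : MonotoneOn r (Ici 0) := by
    intro y₁ hy₁ y₂ hy₂ hy
    rw [hr]
    exact mul_le_mul_of_nonneg_left
      (monotoneOn_cosh_mul_div_cosh_mul (by positivity) hab.le hy₁ hy₂ hy) (by positivity)
  have htop : Tendsto r atTop atTop := by
    rw [hr]
    exact (tendsto_cosh_mul_div_cosh_mul_atTop (by positivity) hab).const_mul_atTop (by positivity)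
  have hcont : ContinuousOn r (Ici 0) := by
    rw [hr]
    exact Continuous.continuousOn (by fun_prop (disch := exact fun y => (cosh_pos _).ne'))
  have hr0 : r 0 ≤ 1 := by
    rw [hr]
    simp only [mul_zero, cosh_zero, div_one, mul_one]
    rw [div_le_one (exp_pos _), exp_le_exp]
    gcongr
  obtain ⟨y₀, hy₀, hry₀⟩ := intermediate_value_Ici hcont htop hr0
  refine ⟨g y₀, fun x => ?_⟩
  have hw : gaussianCoshWeight v h₁ x - gaussianCoshWeight v h₂ x
      = gaussianCoshWeight v h₁ |x| * (r y₀ - r |x|) := by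
    rw [hry₀, hr_def]
    simp only [(gaussianCoshWeight_even v _).comp_abs]
    field_simp [(gaussianCoshWeight_pos v h₁ x).ne']
  rw [hw, ← hg.comp_abs x, mul_left_comm]
  exact mul_nonneg (gaussianCoshWeight_pos v h₁ _).le
    (sub_mul_sub_nonneg_of_antitoneOn_of_monotoneOn hdec hmono (abs_nonneg x) hy₀)

theorem antitoneOn_integral_const_add_gaussianReal (hv : v ≠ 0) (hg : g.Even)
    (hdec : AntitoneOn g (Ici 0)) (hint : ∀ h, Integrable (fun x => g (h + x)) (gaussianReal 0 v)) :
    AntitoneOn (fun h => ∫ x, g (h + x) ∂gaussianReal 0 v) (Ici 0) := by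
  intro h₁ h₁0 h₂ _ h₁₂
  obtain rfl | hlt := h₁₂.eq_or_lt
  · rfl
  obtain ⟨c, hc⟩ := exists_forall_sub_mul_gaussianCoshWeight_sub_nonneg hv hg hdec h₁0 hlt
  simp only [integral_const_add_gaussianReal_eq_integral_gaussianCoshWeight_mul hv hg (hint _)]
  exact integral_mul_le_integral_mul_of_sub_mul_sub_nonneg c
    (integrable_gaussianCoshWeight hv h₁) (integrable_gaussianCoshWeight hv h₂)
    (integrable_gaussianCoshWeight_mul hv hg (hint h₁))
    (integrable_gaussianCoshWeight_mul hv hg (hint h₂))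
    (by rw [integral_gaussianCoshWeight hv, integral_gaussianCoshWeight hv]) (ae_of_all _ hc)

end ProbabilityTheory

theorem stmt15_general (g : ℝ → ℝ) (hev : ∀ z, g (-z) = g z)
    (hdec : AntitoneOn g (Set.Ici 0))
    (v : NNReal) (hv : 0 < v)
    (hint : ∀ h : ℝ, Integrable (fun x => g (h + x)) (gaussianReal 0 v)) :
    MonotoneOn (fun h => ∫ x, g (h + x) ∂(gaussianReal 0 v)) (Set.Iic 0) ∧
    AntitoneOn (fun h => ∫ x, g (h + x) ∂(gaussianReal 0 v)) (Set.Ici 0) ∧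
    ∀ h : ℝ, (∫ x, g (h + x) ∂(gaussianReal 0 v)) ≤ ∫ x, g (0 + x) ∂(gaussianReal 0 v) := by
  have hanti := antitoneOn_integral_const_add_gaussianReal hv.ne' hev hdec hint
  have heven : (fun h => ∫ x, g (h + x) ∂gaussianReal 0 v).Even := integral_neg_add_gaussianReal hev
  exact ⟨heven.monotoneOn_Iic_of_antitoneOn_Ici hanti, hanti,
    heven.le_apply_zero_of_antitoneOn_Ici hanti⟩

/-- Let `g : ℝ → ℝ` be even, decreasing on `[0,∞)`, differentiable with bounded derivative,
integrable against Gaussians, and let `X` be a centered Gaussian of variance `v > 0`. Then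
`h ↦ E[g(h + X)]` is increasing on `(−∞,0]`, decreasing on `[0,∞)`, hence maximal at `h = 0`. -/
theorem stmt15 (g : ℝ → ℝ) (hev : ∀ z, g (-z) = g z)
    (hdec : AntitoneOn g (Set.Ici 0))
    (hdiff : Differentiable ℝ g)
    (hbd : ∃ C, ∀ x, |deriv g x| ≤ C)
    (v : NNReal) (hv : 0 < v)
    (hint : ∀ h : ℝ, Integrable (fun x => g (h + x)) (gaussianReal 0 v)) :
    MonotoneOn (fun h => ∫ x, g (h + x) ∂(gaussianReal 0 v)) (Set.Iic 0) ∧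
    AntitoneOn (fun h => ∫ x, g (h + x) ∂(gaussianReal 0 v)) (Set.Ici 0) ∧
    ∀ h : ℝ, (∫ x, g (h + x) ∂(gaussianReal 0 v)) ≤ ∫ x, g (0 + x) ∂(gaussianReal 0 v) :=
  stmt15_general g hev hdec v hv hint
end
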